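/- Let N ≥ 2, h > 0, and let v = (v_0, …, v_N) be a real grid function with v_0 = v_N = 0. Define the second difference v_{x̄x,i} = (v_{i+1} − 2v_i + v_{i−1})/h², the backward difference v_{x̄,i} = (v_i − v_{i−1})/h, the operator (H_h v)_i = v_i + (h²/12) v_{x̄x,i}, the inner product (y, w) = Σ_{i=1}^{N−1} y_i w_i h, and ‖v_x̄]|₀² = Σ_{i=1}^{N} v_{x̄,i}² h. Then −(H_h v, v_{x̄x}) ≥ (2/3) ‖v_x̄]|₀², where v_{x̄x} denotes the grid function (v_{x̄x,i})_{i=1}^{N−1}. -/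

import Mathlib

/-!
Write `a i = v i - v (i - 1)` for the first differences, so that the second difference is
`a (i + 1) - a i`. Summation by parts with `v 0 = v N = 0` turns `-(v, v_{x̄x})` into
`‖v_x̄]|₀²`, while `(a (i + 1) - a i)² ≤ 2 a (i + 1)² + 2 a i²` bounds the correction term
`(h²/12) (v_{x̄x}, v_{x̄x})` by `(1/3) ‖v_x̄]|₀²`.
-/

open Finset

section SummationByParts

variable {R : Type*} [CommRing R] (v : ℕ → R)

theorem sum_mul_secondDiff_add_sum_sq_bwdDiff {N : ℕ} (hN : 1 ≤ N) :
    ∑ i ∈ Ico 1 N, v i * (v (i + 1) - 2 * v i + v (i - 1)) +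
        ∑ i ∈ Icc 1 N, (v i - v (i - 1)) ^ 2 =
      v N * (v N - v (N - 1)) - v 0 * (v 1 - v 0) := by
  induction N, hN using Nat.le_induction with
  | base => simp only [Ico_self, sum_empty, Icc_self, sum_singleton, Nat.sub_self]; ring
  | succ n hn ih =>
    rw [sum_Ico_succ_top hn, sum_Icc_succ_top (by omega), Nat.add_sub_cancel]
    linear_combination ih

theorem sum_mul_secondDiff_eq_neg_sum_sq_bwdDiff {N : ℕ} (hv0 : v 0 = 0) (hvN : v N = 0) :
    ∑ i ∈ Ico 1 N, v i * (v (i + 1) - 2 * v i + v (i - 1)) =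
      -∑ i ∈ Icc 1 N, (v i - v (i - 1)) ^ 2 := by
  rcases Nat.eq_zero_or_pos N with rfl | hN
  · simp
  · have := sum_mul_secondDiff_add_sum_sq_bwdDiff v hN
    rw [hv0, hvN] at this
    linear_combination this

end SummationByParts

theorem sum_sq_secondDiff_le_four_mul_sum_sq_bwdDiff {R : Type*} [CommRing R] [LinearOrder R]
    [IsStrictOrderedRing R] (v : ℕ → R) (N : ℕ) :
    ∑ i ∈ Ico 1 N, (v (i + 1) - 2 * v i + v (i - 1)) ^ 2 ≤
      4 * ∑ i ∈ Icc 1 N, (v i - v (i - 1)) ^ 2 := by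
  set q : ℕ → R := fun i => (v i - v (i - 1)) ^ 2
  have hq : ∀ i, 0 ≤ q i := fun i => sq_nonneg _
  have hsplit (i : ℕ) : (v (i + 1) - 2 * v i + v (i - 1)) ^ 2 ≤ 2 * (q (i + 1) + q i) := by
    calc (v (i + 1) - 2 * v i + v (i - 1)) ^ 2 = (v (i + 1) - v i + -(v i - v (i - 1))) ^ 2 := by
          ring
      _ ≤ 2 * ((v (i + 1) - v i) ^ 2 + (-(v i - v (i - 1))) ^ 2) := add_sq_le
      _ = 2 * (q (i + 1) + q i) := by simp only [q, Nat.add_sub_cancel, neg_sq]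
  have hshift : ∑ i ∈ Ico 1 N, q (i + 1) ≤ ∑ i ∈ Icc 1 N, q i := by
    rw [sum_Ico_add']
    exact sum_le_sum_of_subset_of_nonneg (fun i hi => by simp only [mem_Ico, mem_Icc] at hi ⊢; omega)
      fun i _ _ => hq i
  have hrestrict : ∑ i ∈ Ico 1 N, q i ≤ ∑ i ∈ Icc 1 N, q i :=
    sum_le_sum_of_subset_of_nonneg Ico_subset_Icc_self fun i _ _ => hq i
  calc ∑ i ∈ Ico 1 N, (v (i + 1) - 2 * v i + v (i - 1)) ^ 2
      ≤ ∑ i ∈ Ico 1 N, 2 * (q (i + 1) + q i) := sum_le_sum fun i _ => hsplit i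
    _ = 2 * (∑ i ∈ Ico 1 N, q (i + 1) + ∑ i ∈ Ico 1 N, q i) := by
      rw [← mul_sum, sum_add_distrib]
    _ ≤ 4 * ∑ i ∈ Icc 1 N, q i := by linarith

theorem compact_coercivity (N : ℕ) (h : ℝ) (hh : 0 < h)
    (v : ℕ → ℝ) (hv0 : v 0 = 0) (hvN : v N = 0) :
    -(∑ i ∈ Finset.Ico 1 N,
        (v i + (h ^ 2 / 12) * ((v (i + 1) - 2 * v i + v (i - 1)) / h ^ 2)) *
          ((v (i + 1) - 2 * v i + v (i - 1)) / h ^ 2) * h) ≥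
      (2 / 3) * ∑ i ∈ Finset.Icc 1 N, ((v i - v (i - 1)) / h) ^ 2 * h := by
  set S := ∑ i ∈ Icc 1 N, (v i - v (i - 1)) ^ 2
  set T := ∑ i ∈ Ico 1 N, (v (i + 1) - 2 * v i + v (i - 1)) ^ 2
  have hlhs : ∑ i ∈ Ico 1 N,
      (v i + (h ^ 2 / 12) * ((v (i + 1) - 2 * v i + v (i - 1)) / h ^ 2)) *
        ((v (i + 1) - 2 * v i + v (i - 1)) / h ^ 2) * h = (-S + T / 12) / h := by
    rw [← sum_mul_secondDiff_eq_neg_sum_sq_bwdDiff v hv0 hvN, sum_div, ← sum_add_distrib,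
      sum_div]
    refine sum_congr rfl fun i _ => ?_
    field_simp
  have hrhs : ∑ i ∈ Icc 1 N, ((v i - v (i - 1)) / h) ^ 2 * h = S / h := by
    rw [sum_div]
    refine sum_congr rfl fun i _ => ?_
    field_simp
  have hTS : T ≤ 4 * S := sum_sq_secondDiff_le_four_mul_sum_sq_bwdDiff v N
  rw [hlhs, hrhs, ge_iff_le, ← sub_nonneg]
  calc 0 ≤ (4 * S - T) / (12 * h) := div_nonneg (by linarith) (by positivity)
    _ = -((-S + T / 12) / h) - 2 / 3 * (S / h) := by field_simp; ring
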